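/- If h₁, h₂ ∈ ℂ^N are linearly independent, λ₁ ∈ (0,1), and w is a unit eigenvector of M = λ₁ h₁h₁ᴴ − (1−λ₁) h₂h₂ᴴ corresponding to its largest eigenvalue μ, then w satisfies (λ₁‖h₁‖² Π_{h₁} + (1−λ₁)‖h₂‖² Π_{h₂}^⊥) w = (μ + (1−λ₁)‖h₂‖²) w, where Π_{h} = hhᴴ/‖h‖² and Π_h^⊥ = I − Π_h; moreover the scalar μ + (1−λ₁)‖h₂‖² is positive. -/

import Mathlib

/-!
Because `‖h‖² Π_h = h hᴴ`, the matrix on the left is `M + (1 - λ₁)‖h₂‖² I`, so the eigen-equation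
for `M` shifts to it. For the sign, the Rayleigh bound `h₁ᴴ M h₁ ≤ μ ‖h₁‖²` combined with
Cauchy–Schwarz `|h₂ᴴ h₁|² ≤ ‖h₁‖² ‖h₂‖²` gives `μ + (1 - λ₁)‖h₂‖² ≥ λ₁ ‖h₁‖² > 0`.
-/

open Matrix

namespace Matrix

variable {𝕜 n : Type*} [RCLike 𝕜] [Fintype n]

lemma sum_norm_sq_eq_norm_toLp_sq (x : n → 𝕜) :
    ∑ i, ‖x i‖ ^ 2 = ‖WithLp.toLp 2 x‖ ^ 2 :=
  (EuclideanSpace.norm_sq_eq _).symm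

lemma sum_norm_sq_pos {x : n → 𝕜} (hx : x ≠ 0) : 0 < ∑ i, ‖x i‖ ^ 2 := by
  rw [sum_norm_sq_eq_norm_toLp_sq]
  exact pow_pos (norm_pos_iff.mpr ((WithLp.toLp_eq_zero 2).not.mpr hx)) 2

lemma star_dotProduct_self_eq_sum_norm_sq (x : n → 𝕜) :
    star x ⬝ᵥ x = ((∑ i, ‖x i‖ ^ 2 : ℝ) : 𝕜) := by
  push_cast
  exact Finset.sum_congr rfl fun i _ => RCLike.conj_mul (x i)

lemma norm_star_dotProduct_sq_le (x y : n → 𝕜) :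
    ‖star x ⬝ᵥ y‖ ^ 2 ≤ (∑ i, ‖x i‖ ^ 2) * ∑ i, ‖y i‖ ^ 2 := by
  rw [sum_norm_sq_eq_norm_toLp_sq, sum_norm_sq_eq_norm_toLp_sq, ← mul_pow, dotProduct_comm,
    ← EuclideanSpace.inner_toLp_toLp]
  gcongr
  exact norm_inner_le_norm _ _

lemma star_dotProduct_vecMulVec_star_mulVec (x y : n → 𝕜) :
    star x ⬝ᵥ (vecMulVec y (star y) *ᵥ x) = ((‖star y ⬝ᵥ x‖ ^ 2 : ℝ) : 𝕜) := by
  rw [vecMulVec_mulVec, op_smul_eq_smul, dotProduct_smul, smul_eq_mul, star_dotProduct x y,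
    RCLike.star_def, RCLike.mul_conj, RCLike.ofReal_pow]

lemma smul_inv_smul_vecMulVec_star_self (t : ℝ) (x : n → 𝕜) :
    (t * ∑ i, ‖x i‖ ^ 2) • ((∑ i, ‖x i‖ ^ 2)⁻¹ • vecMulVec x (star x)) =
      t • vecMulVec x (star x) := by
  rcases eq_or_ne x 0 with rfl | hx
  · simp
  · rw [smul_smul, mul_assoc, mul_inv_cancel₀ (sum_norm_sq_pos hx).ne', mul_one]

open scoped MatrixOrder in
lemma IsHermitian.le_algebraMap_iSup_eigenvalues [DecidableEq n] {A : Matrix n n 𝕜}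
    (hA : A.IsHermitian) : A ≤ algebraMap ℝ (Matrix n n 𝕜) (⨆ i, hA.eigenvalues i) := by
  refine le_algebraMap_of_spectrum_le (fun x hx => ?_) hA.isSelfAdjoint
  obtain ⟨i, rfl⟩ := hA.spectrum_real_eq_range_eigenvalues ▸ hx
  exact le_ciSup (Set.finite_range _).bddAbove i

open scoped MatrixOrder in
lemma IsHermitian.re_star_dotProduct_mulVec_le [DecidableEq n] {A : Matrix n n 𝕜}
    (hA : A.IsHermitian) (x : n → 𝕜) :
    RCLike.re (star x ⬝ᵥ (A *ᵥ x)) ≤ (⨆ i, hA.eigenvalues i) * ∑ i, ‖x i‖ ^ 2 := by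
  have := (le_iff.mp hA.le_algebraMap_iSup_eigenvalues).re_dotProduct_nonneg x
  rw [Algebra.algebraMap_eq_smul_one, sub_mulVec, smul_mulVec, one_mulVec, dotProduct_sub,
    dotProduct_smul, star_dotProduct_self_eq_sum_norm_sq, map_sub, RCLike.smul_re,
    RCLike.ofReal_re] at this
  linarith

lemma re_star_dotProduct_smul_vecMulVec_sub_smul_vecMulVec_mulVec (l : ℝ) (h₁ h₂ : n → 𝕜) :
    RCLike.re (star h₁ ⬝ᵥ ((l • vecMulVec h₁ (star h₁) - (1 - l) • vecMulVec h₂ (star h₂)) *ᵥ h₁))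
      = l * (∑ i, ‖h₁ i‖ ^ 2) ^ 2 - (1 - l) * ‖star h₂ ⬝ᵥ h₁‖ ^ 2 := by
  rw [sub_mulVec, smul_mulVec, smul_mulVec, dotProduct_sub, dotProduct_smul, dotProduct_smul,
    star_dotProduct_vecMulVec_star_mulVec, star_dotProduct_vecMulVec_star_mulVec,
    star_dotProduct_self_eq_sum_norm_sq, map_sub, RCLike.smul_re, RCLike.smul_re,
    RCLike.ofReal_re, RCLike.ofReal_re, RCLike.norm_ofReal, abs_of_nonneg (by positivity)]

lemma mul_sum_norm_sq_le_iSup_eigenvalues_add [DecidableEq n] {h₁ h₂ : n → 𝕜} (h₁ne : h₁ ≠ 0)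
    {l : ℝ} (hl : l ≤ 1)
    (hM : (l • vecMulVec h₁ (star h₁) - (1 - l) • vecMulVec h₂ (star h₂)).IsHermitian) :
    l * ∑ i, ‖h₁ i‖ ^ 2 ≤ (⨆ i, hM.eigenvalues i) + (1 - l) * ∑ i, ‖h₂ i‖ ^ 2 := by
  have ha := sum_norm_sq_pos h₁ne
  have hray := hM.re_star_dotProduct_mulVec_le h₁
  rw [re_star_dotProduct_smul_vecMulVec_sub_smul_vecMulVec_mulVec] at hray
  have hCS := mul_le_mul_of_nonneg_left (norm_star_dotProduct_sq_le h₂ h₁) (sub_nonneg.mpr hl)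
  refine le_of_mul_le_mul_right ?_ ha
  linarith

lemma smul_smul_vecMulVec_add_smul_one_sub_eq [DecidableEq n] (l : ℝ) (h₁ h₂ : n → 𝕜) :
    (l * ∑ i, ‖h₁ i‖ ^ 2) • ((∑ i, ‖h₁ i‖ ^ 2)⁻¹ • vecMulVec h₁ (star h₁))
      + ((1 - l) * ∑ i, ‖h₂ i‖ ^ 2) •
        ((1 : Matrix n n 𝕜) - (∑ i, ‖h₂ i‖ ^ 2)⁻¹ • vecMulVec h₂ (star h₂))
      = l • vecMulVec h₁ (star h₁) - (1 - l) • vecMulVec h₂ (star h₂)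
        + ((1 - l) * ∑ i, ‖h₂ i‖ ^ 2) • 1 := by
  rw [smul_sub, smul_inv_smul_vecMulVec_star_self, smul_inv_smul_vecMulVec_star_self]
  abel

end Matrix

theorem stmt_12_general (N : ℕ) (h₁ h₂ : Fin N → ℂ) (hli : LinearIndependent ℂ ![h₁, h₂])
    (l : ℝ) (hl : l ∈ Set.Ioo (0:ℝ) 1)
    (M : Matrix (Fin N) (Fin N) ℂ)
    (hMdef : M = l • vecMulVec h₁ (star h₁) - (1 - l) • vecMulVec h₂ (star h₂))
    (hM : M.IsHermitian) (μ : ℝ) (hμ : μ = ⨆ i, hM.eigenvalues i)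
    (w : Fin N → ℂ) (hev : M *ᵥ w = (μ : ℂ) • w) :
    ((l * ∑ i, ‖h₁ i‖ ^ 2) • ((∑ i, ‖h₁ i‖ ^ 2)⁻¹ • vecMulVec h₁ (star h₁))
      + ((1 - l) * ∑ i, ‖h₂ i‖ ^ 2) •
        ((1 : Matrix (Fin N) (Fin N) ℂ) - (∑ i, ‖h₂ i‖ ^ 2)⁻¹ • vecMulVec h₂ (star h₂))) *ᵥ w
      = (((μ + (1 - l) * ∑ i, ‖h₂ i‖ ^ 2 : ℝ)) : ℂ) • w ∧
    0 < μ + (1 - l) * ∑ i, ‖h₂ i‖ ^ 2 := by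
  obtain ⟨hl0, hl1⟩ := hl
  refine ⟨?_, ?_⟩
  · rw [smul_smul_vecMulVec_add_smul_one_sub_eq, ← hMdef, add_mulVec, hev, smul_mulVec,
      one_mulVec, Complex.ofReal_add, add_smul, Complex.coe_smul, Complex.coe_smul]
  · subst hMdef hμ
    have h₁ne : h₁ ≠ 0 := by simpa using hli.ne_zero 0
    have hbound := mul_sum_norm_sq_le_iSup_eigenvalues_add h₁ne hl1.le hM
    have hpos := mul_pos hl0 (sum_norm_sq_pos h₁ne)
    linarith

/-- The eigenvector identity linking the principal-eigenvector parametrization of two-user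
MISO IC efficient beamforming to the MRT/ZF convex-combination parametrization. -/
theorem stmt_12 (N : ℕ) (h₁ h₂ : Fin N → ℂ) (hli : LinearIndependent ℂ ![h₁, h₂])
    (l : ℝ) (hl : l ∈ Set.Ioo (0:ℝ) 1)
    (M : Matrix (Fin N) (Fin N) ℂ)
    (hMdef : M = l • vecMulVec h₁ (star h₁) - (1 - l) • vecMulVec h₂ (star h₂))
    (hM : M.IsHermitian) (μ : ℝ) (hμ : μ = ⨆ i, hM.eigenvalues i)
    (w : Fin N → ℂ) (hw : (∑ i, ‖w i‖ ^ 2) = 1) (hev : M *ᵥ w = (μ : ℂ) • w) :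
    ((l * ∑ i, ‖h₁ i‖ ^ 2) • ((∑ i, ‖h₁ i‖ ^ 2)⁻¹ • vecMulVec h₁ (star h₁))
      + ((1 - l) * ∑ i, ‖h₂ i‖ ^ 2) •
        ((1 : Matrix (Fin N) (Fin N) ℂ) - (∑ i, ‖h₂ i‖ ^ 2)⁻¹ • vecMulVec h₂ (star h₂))) *ᵥ w
      = (((μ + (1 - l) * ∑ i, ‖h₂ i‖ ^ 2 : ℝ)) : ℂ) • w ∧
    0 < μ + (1 - l) * ∑ i, ‖h₂ i‖ ^ 2 :=
  stmt_12_general N h₁ h₂ hli l hl M hMdef hM μ hμ w hev
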